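/- arXiv:2412.18685 — 2 statements merged into one kernel-verified Lean document; each statement's English description precedes it below -/
import Mathlib

section
/- Let ρ = Σ_{i=1}^N r_i and suppose ρ > 0. Set ω_i = u_i^max − u_i^old for each i. If ρ·Δt ≤ (min_{1≤i≤N} m_i)·(Σ_{j=1}^N ω_j), then there exists a vector q ∈ ℝ^N with Σ_{i=1}^N q_i = 0 such that for every i, u_i^min ≤ u_i^old + (Δt/m_i)(r_i + q_i) ≤ u_i^max. (Case ρ > 0 of the Solvability Theorem: the feasible set of the optimization problem is nonempty.) -/
/-!
Take the control that cancels `r` and redistributes the total `ρ = ∑ r` in proportion to the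
headroom `ω = umax - uold`. Then `r i + q i = (ρ / Ω) ω i` with `Ω = ∑ ω`, so the update moves
`uold i` towards `umax i` by the fraction `θ i = Δt ρ / (m i Ω)` of the headroom. The solvability
condition `ρ Δt ≤ (min m) Ω` says exactly that every `θ i ≤ 1`, so `u i` is a convex combination
of `uold i` and `umax i`.
-/

open Finset

namespace Solvability

variable {ι : Type*} [Fintype ι]

noncomputable def proportionalControl (r ω : ι → ℝ) (i : ι) : ℝ :=
  -r i + (∑ j, r j) / (∑ j, ω j) * ω i

theorem sum_proportionalControl (r ω : ι → ℝ) (hΩ : ∑ j, ω j ≠ 0) :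
    ∑ i, proportionalControl r ω i = 0 := by
  simp only [proportionalControl, sum_add_distrib, sum_neg_distrib, ← mul_sum]
  field_simp
  ring

theorem add_proportionalControl (r ω : ι → ℝ) (i : ι) :
    r i + proportionalControl r ω i = (∑ j, r j) / (∑ j, ω j) * ω i := by
  rw [proportionalControl]
  ring

theorem exists_feasible_control_of_sum_pos (Δt μ : ℝ) (hΔt : 0 < Δt)
    (m r uold umin umax : ι → ℝ) (hm : ∀ i, 0 < m i) (hμ : ∀ i, μ ≤ m i)
    (hbounds : ∀ i, umin i ≤ uold i ∧ uold i ≤ umax i) (hρ : 0 < ∑ i, r i)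
    (hsolv : (∑ i, r i) * Δt ≤ μ * ∑ i, (umax i - uold i)) :
    ∃ q : ι → ℝ, ∑ i, q i = 0 ∧
      ∀ i, umin i ≤ uold i + Δt / m i * (r i + q i) ∧
        uold i + Δt / m i * (r i + q i) ≤ umax i := by
  set ω : ι → ℝ := fun i => umax i - uold i
  set ρ := ∑ i, r i
  set Ω := ∑ i, ω i
  have hω : ∀ i, 0 ≤ ω i := fun i => sub_nonneg.mpr (hbounds i).2
  have hΩ : 0 < Ω := by
    refine (sum_nonneg fun i _ => hω i).lt_of_ne' fun h => ?_
    rw [show Ω = 0 from h, mul_zero] at hsolv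
    linarith [mul_pos hρ hΔt]
  refine ⟨proportionalControl r ω, sum_proportionalControl r ω hΩ.ne', fun i => ?_⟩
  have hθ : Δt / m i * (ρ / Ω) ∈ Set.Icc (0 : ℝ) 1 := by
    refine ⟨by have := hm i; positivity, ?_⟩
    rw [div_mul_div_comm, div_le_one (mul_pos (hm i) hΩ)]
    nlinarith [hμ i]
  have hu : uold i + Δt / m i * (r i + proportionalControl r ω i) =
      uold i + (Δt / m i * (ρ / Ω)) • (umax i - uold i) := by
    rw [add_proportionalControl, smul_eq_mul]
    ring
  rw [hu, ← Set.mem_Icc]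
  exact (convex_Icc (umin i) (umax i)).add_smul_sub_mem
    ⟨(hbounds i).1, (hbounds i).2⟩ ⟨(hbounds i).1.trans (hbounds i).2, le_rfl⟩ hθ

end Solvability

/-- Case ρ > 0 of the Solvability Theorem: if ρ·Δt ≤ (min_i m_i)·(Σ_j ω_j)
with ω_i = u_i^max − u_i^old, then the feasible set is nonempty. -/
theorem solvability_rho_pos (N : ℕ) (hN : 0 < N) (Δt : ℝ) (hΔt : 0 < Δt)
    (m r uold umin umax : Fin N → ℝ)
    (hm : ∀ i, 0 < m i)
    (hbounds : ∀ i, umin i ≤ uold i ∧ uold i ≤ umax i)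
    (ρ : ℝ) (hρ : ρ = ∑ i, r i) (hρpos : 0 < ρ)
    (ω : Fin N → ℝ) (hω : ∀ i, ω i = umax i - uold i)
    (hsolv : ρ * Δt ≤
      (Finset.univ.inf' (Finset.univ_nonempty_iff.mpr (Fin.pos_iff_nonempty.mp hN)) m) *
        (∑ j, ω j)) :
    ∃ q : Fin N → ℝ, (∑ i, q i = 0) ∧
      ∀ i, umin i ≤ uold i + (Δt / m i) * (r i + q i) ∧
        uold i + (Δt / m i) * (r i + q i) ≤ umax i := by
  subst hρ
  obtain rfl : ω = fun i => umax i - uold i := funext hω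
  exact Solvability.exists_feasible_control_of_sum_pos Δt _ hΔt m r uold umin umax hm
    (fun i => inf'_le m (mem_univ i)) hbounds hρpos hsolv
end

section
/- Let ρ = Σ_{i=1}^N r_i and suppose ρ < 0. Set ω_i = u_i^old − u_i^min for each i. If (−ρ)·Δt ≤ (min_{1≤i≤N} m_i)·(Σ_{j=1}^N ω_j), then there exists a vector q ∈ ℝ^N with Σ_{i=1}^N q_i = 0 such that for every i, u_i^min ≤ u_i^old + (Δt/m_i)(r_i + q_i) ≤ u_i^max. (Case ρ < 0 of the Solvability Theorem, with the solvability condition written for the magnitude of ρ.) -/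
/-! The control `q i = -r i + ρ * ω i / ∑ ω` cancels the sources and distributes the net
outflow `ρ` in proportion to the slack `ω i = uold i - umin i`. Every value then decreases by
`(-ρ) Δt / (m i ∑ ω) * ω i`, which is at most `ω i` exactly when `(-ρ) Δt ≤ m i ∑ ω`. -/

open Finset

section
variable {ι : Type*} [Fintype ι]

theorem sum_mul_div_sum_eq (c : ℝ) (w : ι → ℝ) (hw : ∑ j, w j ≠ 0) :
    ∑ i, c * w i / ∑ j, w j = c := by
  rw [← sum_div, ← mul_sum, mul_div_cancel_right₀ _ hw]

theorem exists_feasible_control_of_sum_neg (Δt : ℝ) (hΔt : 0 < Δt)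
    (m r uold umin umax : ι → ℝ) (hm : ∀ i, 0 < m i)
    (hbounds : ∀ i, umin i ≤ uold i ∧ uold i ≤ umax i) (hρ : ∑ i, r i < 0)
    (hsolv : ∀ i, -(∑ j, r j) * Δt ≤ m i * ∑ j, (uold j - umin j)) :
    ∃ q : ι → ℝ, (∑ i, q i = 0) ∧
      ∀ i, umin i ≤ uold i + (Δt / m i) * (r i + q i) ∧
        uold i + (Δt / m i) * (r i + q i) ≤ umax i := by
  set ρ := ∑ i, r i
  set S := ∑ j, (uold j - umin j)
  obtain ⟨i₀⟩ : Nonempty ι := by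
    by_contra h
    simp only [not_nonempty_iff] at h
    simp [ρ] at hρ
  have hflux : 0 < -ρ * Δt := mul_pos (neg_pos.mpr hρ) hΔt
  have hS : 0 < S := pos_of_mul_pos_right (hflux.trans_le (hsolv i₀)) (hm i₀).le
  refine ⟨fun i => -r i + ρ * (uold i - umin i) / S, ?_, fun i => ?_⟩
  · rw [sum_add_distrib, sum_neg_distrib, sum_mul_div_sum_eq ρ _ hS.ne', neg_add_cancel]
  have hdrop : uold i + Δt / m i * (r i + (-r i + ρ * (uold i - umin i) / S)) =
      uold i - -ρ * Δt / (m i * S) * (uold i - umin i) := by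
    field_simp [(hm i).ne', hS.ne']
    ring
  have hratio : -ρ * Δt / (m i * S) ≤ 1 := div_le_one_of_le₀ (hsolv i) (mul_pos (hm i) hS).le
  have hslack : 0 ≤ uold i - umin i := sub_nonneg.mpr (hbounds i).1
  rw [hdrop]
  constructor
  · linarith [mul_le_of_le_one_left hslack hratio]
  · have : 0 ≤ -ρ * Δt / (m i * S) * (uold i - umin i) :=
      mul_nonneg (div_nonneg hflux.le (mul_pos (hm i) hS).le) hslack
    linarith [(hbounds i).2]

end

/-- Case ρ < 0 of the Solvability Theorem: if (−ρ)·Δt ≤ (min_i m_i)·(Σ_j ω_j)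
with ω_i = u_i^old − u_i^min, then the feasible set is nonempty. -/
theorem solvability_rho_neg (N : ℕ) (hN : 0 < N) (Δt : ℝ) (hΔt : 0 < Δt)
    (m r uold umin umax : Fin N → ℝ)
    (hm : ∀ i, 0 < m i)
    (hbounds : ∀ i, umin i ≤ uold i ∧ uold i ≤ umax i)
    (ρ : ℝ) (hρ : ρ = ∑ i, r i) (hρneg : ρ < 0)
    (ω : Fin N → ℝ) (hω : ∀ i, ω i = uold i - umin i)
    (hsolv : (-ρ) * Δt ≤
      (Finset.univ.inf' (Finset.univ_nonempty_iff.mpr (Fin.pos_iff_nonempty.mp hN)) m) *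
        (∑ j, ω j)) :
    ∃ q : Fin N → ℝ, (∑ i, q i = 0) ∧
      ∀ i, umin i ≤ uold i + (Δt / m i) * (r i + q i) ∧
        uold i + (Δt / m i) * (r i + q i) ≤ umax i := by
  obtain rfl : ω = fun i => uold i - umin i := funext hω
  subst hρ
  have hslack : 0 ≤ ∑ j, (uold j - umin j) :=
    sum_nonneg fun j _ => sub_nonneg.mpr (hbounds j).1
  refine exists_feasible_control_of_sum_neg Δt hΔt m r uold umin umax hm hbounds hρneg
    fun i => hsolv.trans ?_
  exact mul_le_mul_of_nonneg_right (inf'_le m (mem_univ i)) hslack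
end
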